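/- Conversely, if a family {ι_i : U_i → X} of open topological embeddings satisfies the sheaf condition (precomposition is a bijection Hom(X,Y) → matching families) for every topological space Y, then the family is jointly surjective. -/
import Mathlib


/-- If a family `{ι i : U i → X}` of open topological embeddings satisfies the sheaf
condition (precomposition is a bijection from continuous maps `X → Y` onto matching
families) for every topological space `Y`, then the family is jointly surjective. -/
theorem sheaf_condition_implies_jointly_surjective
    {I : Type} {X : Type} [TopologicalSpace X]
    {U : I → Type} [∀ i, TopologicalSpace (U i)]
    (ι : ∀ i, U i → X) (hemb : ∀ i, Topology.IsOpenEmbedding (ι i))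
    (hsheaf : ∀ (Y : Type) [TopologicalSpace Y],
      (∀ f g : X → Y, Continuous f → Continuous g →
        (∀ i, f ∘ ι i = g ∘ ι i) → f = g) ∧
      (∀ F : ∀ i, U i → Y, (∀ i, Continuous (F i)) →
        (∀ (i j : I) (u : U i) (v : U j), ι i u = ι j v → F i u = F j v) →
        ∃ f : X → Y, Continuous f ∧ ∀ i, f ∘ ι i = F i)) :
    ∀ x : X, ∃ (i : I) (u : U i), ι i u = x := by
  intro x
  classical
  by_contra h
  push_neg at h
  letI : TopologicalSpace Bool := ⊤
  obtain ⟨huniq, _⟩ := hsheaf Bool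
  have := huniq (fun _ => true) (fun y => decide (y ≠ x)) continuous_top continuous_top
    (by
      intro i
      funext u
      simp only [Function.comp]
      have : ι i u ≠ x := h i u
      simp [this])
  have hx := congrFun this x
  simp at hx
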